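/- Let s > 1. There exists a constant C > 0, depending only on s and not on k or L, such that for every sequence (c_ξ)_{ξ∈2πℤ/L} of nonnegative numbers, Σ_{ξ∈2πℤ/L} c_ξ ≤ C L^{1/2} ( Σ_{ξ∈2πℤ/L} m(ξ)² c_ξ² )^{1/2}. -/

import Mathlib

open scoped Classical BigOperators ENNReal

noncomputable section

/-- Japanese bracket `⟨x⟩ = (1 + x²)^{1/2}`. -/
def jap (x : ℝ) : ℝ := Real.sqrt (1 + x ^ 2)

/-- The frequency `ξ = 2πn/L ∈ 2πℤ/L`. -/
def freq (L : ℕ) (n : ℤ) : ℝ := 2 * Real.pi * (n : ℝ) / (L : ℝ)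

/-- `τ` is an admissible `𝒩_r`-reduced residue for the integer `M` (where `ξ = 2π(M + j/L)`,
`M = kη̃ + τ̃` with `η̃ ∈ {0,1,3,4}` and `−k/2 < τ̃ ≤ k/2`). -/
def NrWitness (k : ℝ) (M : ℤ) (τ : ℤ) : Prop :=
  ∃ η : ℤ, (η = 0 ∨ η = 1 ∨ η = 3 ∨ η = 4) ∧
    (M : ℝ) = k * (η : ℝ) + (τ : ℝ) ∧ -(k / 2) < (τ : ℝ) ∧ (τ : ℝ) ≤ k / 2

/-- The multiplier `m(ξ)` for `ξ = 2πn/L`, written via `n = L·M + j`, `0 ≤ j < L`: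
`m(ξ) = ⟨τ̃⟩^(s−1/2)` on `𝒩_r`, `⟨k⟩^(s−1/2)` on `𝒩_l \ 𝒩_r`,
`⟨k⟩^(s−1/2)⟨τ⟩^(1/2)` resp. `⟨k⟩^(s−1/2)⟨k−τ⟩^(1/2)` on `𝒩_m` with `ξ > 0` resp. `ξ < 0`,
and `⟨ξ⟩^s` on `𝒩_h`, where `M = kη + τ`, `0 ≤ τ < k`. -/
def mult (s k : ℝ) (L : ℕ) (n : ℤ) : ℝ :=
  let M : ℤ := Int.ediv n (L : ℤ)
  if h : ∃ τ : ℤ, NrWitness k M τ then jap ((h.choose : ℤ) : ℝ) ^ (s - 1 / 2)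
  else
    let η : ℤ := ⌊(M : ℝ) / k⌋
    let τ : ℝ := (M : ℝ) - k * (η : ℝ)
    if -99 ≤ η ∧ η ≤ 98 then jap k ^ (s - 1 / 2)
    else if η = 99 ∨ η = -100 then
      if 0 < n then jap k ^ (s - 1 / 2) * jap τ ^ ((1 : ℝ) / 2)
      else if n < 0 then jap k ^ (s - 1 / 2) * jap (k - τ) ^ ((1 : ℝ) / 2)
      else jap (freq L n) ^ s
    else jap (freq L n) ^ s

/-!
Weighted Cauchy–Schwarz: if `w(ξ) m(ξ)² ≥ 1`, then `Σ c_ξ ≤ (Σ w)^{1/2} (Σ m² c²)^{1/2}`.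
Writing `ξ = 2π(M + j/L)`, the weight is chosen to depend on `M` only, so `Σ_ξ w = L Σ_M w(M)`,
and it remains to make `Σ_M w(M)` finite uniformly in `k`; put `p = 2s − 1 > 1`.
On `𝒩_r` take `w = ⟨τ̃⟩^{-p}`: since `M = kη̃ + τ̃` with `η̃ ∈ {0,1,3,4}`, the map `M ↦ (η̃, τ̃)` is
injective and these weights sum to at most `4 Σ_τ ⟨τ⟩^{-p}`.
Elsewhere take `w = 101^p ⟨M⟩^{-p}`: on `𝒩_l ∪ 𝒩_m` we have `|M| ≤ 100k` and `m ≥ ⟨k⟩^{s−1/2}`,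
and on `𝒩_h` we have `⟨M⟩ ≤ 3⟨ξ⟩` and `m = ⟨ξ⟩^s ≥ ⟨ξ⟩^{p/2}`.
-/

open Function

lemma jap_nonneg (x : ℝ) : 0 ≤ jap x := Real.sqrt_nonneg _

lemma one_le_jap (x : ℝ) : 1 ≤ jap x := Real.one_le_sqrt.2 (by nlinarith [sq_nonneg x])

lemma jap_pos (x : ℝ) : 0 < jap x := one_pos.trans_le (one_le_jap x)

lemma abs_le_jap (x : ℝ) : |x| ≤ jap x := Real.abs_le_sqrt (by linarith)

lemma jap_le_one_add_abs (x : ℝ) : jap x ≤ 1 + |x| :=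
  Real.sqrt_le_iff.2 ⟨by positivity, by nlinarith [abs_nonneg x, sq_abs x]⟩

lemma jap_intCast_le_of_floor_div_mem {k : ℝ} (hk : 0 < k) {M : ℤ}
    (h₁ : -100 ≤ ⌊(M : ℝ) / k⌋) (h₂ : ⌊(M : ℝ) / k⌋ ≤ 99) : jap M ≤ 101 * jap k := by
  have hlo : (-100 : ℝ) ≤ M / k := le_trans (by exact_mod_cast h₁) (Int.floor_le _)
  have hhi : (M : ℝ) / k < 100 :=
    (Int.lt_floor_add_one _).trans_le (by linarith [(Int.cast_le (R := ℝ)).2 h₂])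
  rw [le_div_iff₀ hk] at hlo
  rw [div_lt_iff₀ hk] at hhi
  have hM : |(M : ℝ)| ≤ 100 * k := abs_le.2 ⟨by linarith, hhi.le⟩
  calc jap M ≤ 1 + |(M : ℝ)| := jap_le_one_add_abs _
    _ ≤ jap k + 100 * jap k := by linarith [one_le_jap k, (le_abs_self k).trans (abs_le_jap k)]
    _ = 101 * jap k := by ring

lemma abs_intCast_ediv_le (n : ℤ) (L : ℕ) : |((n / L : ℤ) : ℝ)| ≤ |(n : ℝ) / L| + 1 := by
  have hfloor : ⌊(n : ℝ) / L⌋ = n / L := by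
    rw [← Rat.floor_intCast_div_natCast, ← Rat.floor_cast (α := ℝ)]
    push_cast
    rfl
  rw [← hfloor, abs_le]
  have := Int.floor_le ((n : ℝ) / L)
  have := Int.lt_floor_add_one ((n : ℝ) / L)
  constructor <;> linarith [neg_abs_le ((n : ℝ) / L), le_abs_self ((n : ℝ) / L)]

lemma jap_intCast_ediv_le_three_mul (n : ℤ) (L : ℕ) :
    jap ((n / L : ℤ) : ℝ) ≤ 3 * jap (freq L n) := by
  have hfreq : |(n : ℝ) / L| ≤ |freq L n| := by
    rw [freq, mul_div_assoc, abs_mul, abs_of_pos (by positivity : (0 : ℝ) < 2 * Real.pi)]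
    exact le_mul_of_one_le_left (abs_nonneg _) (by linarith [Real.pi_gt_three])
  calc jap ((n / L : ℤ) : ℝ) ≤ 1 + (|(n : ℝ) / L| + 1) :=
        (jap_le_one_add_abs _).trans (by linarith [abs_intCast_ediv_le n L])
    _ ≤ 3 * jap (freq L n) := by linarith [one_le_jap (freq L n), abs_le_jap (freq L n)]

lemma rpow_sq_eq_rpow_two_mul {a : ℝ} (ha : 0 ≤ a) (r : ℝ) : (a ^ r) ^ 2 = a ^ (2 * r) := by
  rw [← Real.rpow_mul_natCast ha]
  ring_nf

lemma mult_sq_of_nrWitness {s k : ℝ} {L : ℕ} {n : ℤ} (h : ∃ τ, NrWitness k (n / L) τ) :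
    mult s k L n ^ 2 = jap h.choose ^ (2 * s - 1) := by
  rw [mult, ← Int.div_def, dif_pos h, rpow_sq_eq_rpow_two_mul (jap_nonneg _)]
  ring_nf

lemma jap_rpow_le_mult_sq {s k : ℝ} {L : ℕ} {n : ℤ} (hs : 1 ≤ s) (hk : 0 < k)
    (h : ¬ ∃ τ, NrWitness k (n / L) τ) :
    jap ((n / L : ℤ) : ℝ) ^ (2 * s - 1) ≤ 101 ^ (2 * s - 1) * mult s k L n ^ 2 := by
  rw [mult, ← Int.div_def, dif_neg h]
  dsimp only
  set M : ℤ := n / L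
  have hp : 0 ≤ 2 * s - 1 := by linarith
  have of_le {x m : ℝ} (hx : jap M ≤ 101 * x) (hm : x ^ (2 * s - 1) ≤ m ^ 2) :
      jap M ^ (2 * s - 1) ≤ 101 ^ (2 * s - 1) * m ^ 2 :=
    calc _ ≤ (101 * x) ^ (2 * s - 1) := Real.rpow_le_rpow (jap_nonneg _) hx hp
      _ = 101 ^ (2 * s - 1) * x ^ (2 * s - 1) :=
          Real.mul_rpow (by norm_num) (by linarith [jap_nonneg (M : ℝ)])
      _ ≤ _ := by gcongr
  have hk_sq {a : ℝ} (ha : 1 ≤ a) : jap k ^ (2 * s - 1) ≤ (jap k ^ (s - 1 / 2) * a) ^ 2 := by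
    have h0 : 0 ≤ jap k ^ (s - 1 / 2) := Real.rpow_nonneg (jap_nonneg k) _
    calc jap k ^ (2 * s - 1) = (jap k ^ (s - 1 / 2)) ^ 2 := by
          rw [rpow_sq_eq_rpow_two_mul (jap_nonneg _)]; ring_nf
      _ ≤ _ := pow_le_pow_left₀ h0 (le_mul_of_one_le_right h0 ha) 2
  have hfreq : jap M ≤ 101 * jap (freq L n) :=
    (jap_intCast_ediv_le_three_mul n L).trans (by linarith [jap_nonneg (freq L n)])
  have hfreq_sq : jap (freq L n) ^ (2 * s - 1) ≤ (jap (freq L n) ^ s) ^ 2 := by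
    rw [rpow_sq_eq_rpow_two_mul (jap_nonneg _)]
    exact Real.rpow_le_rpow_of_exponent_le (one_le_jap _) (by linarith)
  have hjap_half (x : ℝ) : 1 ≤ jap x ^ ((1 : ℝ) / 2) :=
    Real.one_le_rpow (one_le_jap x) (by norm_num)
  split_ifs
  · refine of_le (jap_intCast_le_of_floor_div_mem hk (by omega) (by omega)) ?_
    simpa using hk_sq le_rfl
  · refine of_le (jap_intCast_le_of_floor_div_mem hk (by omega) (by omega)) (hk_sq (hjap_half _))
  · refine of_le (jap_intCast_le_of_floor_div_mem hk (by omega) (by omega)) (hk_sq (hjap_half _))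
  · exact of_le hfreq hfreq_sq
  · exact of_le hfreq hfreq_sq

def nrWeight (p k : ℝ) (M : ℤ) : ℝ :=
  if h : ∃ τ, NrWitness k M τ then jap h.choose ^ (-p) else 0

def weight (p k : ℝ) (M : ℤ) : ℝ := nrWeight p k M + 101 ^ p * jap M ^ (-p)

lemma nrWeight_nonneg (p k : ℝ) (M : ℤ) : 0 ≤ nrWeight p k M := by
  unfold nrWeight
  split_ifs
  exacts [Real.rpow_nonneg (jap_nonneg _) _, le_rfl]

lemma nrWeight_le_weight (p k : ℝ) (M : ℤ) : nrWeight p k M ≤ weight p k M :=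
  le_add_of_nonneg_right (mul_nonneg (by positivity) (Real.rpow_nonneg (jap_nonneg _) _))

lemma weight_nonneg (p k : ℝ) (M : ℤ) : 0 ≤ weight p k M :=
  (nrWeight_nonneg p k M).trans (nrWeight_le_weight p k M)

lemma jap_rpow_neg_mul_rpow (x p : ℝ) : jap x ^ (-p) * jap x ^ p = 1 := by
  rw [Real.rpow_neg (jap_nonneg x), inv_mul_cancel₀ (Real.rpow_pos_of_pos (jap_pos x) _).ne']

lemma one_le_weight_mul_mult_sq {s k : ℝ} {L : ℕ} (hs : 1 ≤ s) (hk : 0 < k) (n : ℤ) :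
    1 ≤ weight (2 * s - 1) k (n / L) * mult s k L n ^ 2 := by
  by_cases h : ∃ τ, NrWitness k (n / L) τ
  · calc 1 = nrWeight (2 * s - 1) k (n / L) * mult s k L n ^ 2 := by
          rw [nrWeight, dif_pos h, mult_sq_of_nrWitness h, jap_rpow_neg_mul_rpow]
      _ ≤ _ := by
          gcongr
          exact nrWeight_le_weight _ _ _
  · calc (1 : ℝ) = jap ((n / L : ℤ) : ℝ) ^ (-(2 * s - 1)) * jap ((n / L : ℤ) : ℝ) ^ (2 * s - 1) :=
          (jap_rpow_neg_mul_rpow _ _).symm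
      _ ≤ jap ((n / L : ℤ) : ℝ) ^ (-(2 * s - 1)) * (101 ^ (2 * s - 1) * mult s k L n ^ 2) :=
          mul_le_mul_of_nonneg_left (jap_rpow_le_mult_sq hs hk h)
            (Real.rpow_nonneg (jap_nonneg _) _)
      _ = _ := by rw [weight, nrWeight, dif_neg h]; ring

lemma summable_jap_rpow_neg {p : ℝ} (hp : 1 < p) : Summable fun n : ℤ => jap n ^ (-p) := by
  refine (Real.summable_abs_int_rpow hp).of_norm_bounded_eventually ?_
  filter_upwards [Filter.eventually_cofinite_ne 0] with n hn
  rw [Real.norm_of_nonneg (Real.rpow_nonneg (jap_nonneg _) _)]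
  exact Real.rpow_le_rpow_of_nonpos (by positivity) (abs_le_jap _) (by linarith)

lemma tsum_ofReal_jap_rpow_neg_ne_top {p : ℝ} (hp : 1 < p) :
    ∑' n : ℤ, ENNReal.ofReal (jap n ^ (-p)) ≠ ⊤ := by
  rw [← ENNReal.ofReal_tsum_of_nonneg (fun _ => Real.rpow_nonneg (jap_nonneg _) _)
    (summable_jap_rpow_neg hp)]
  exact ENNReal.ofReal_ne_top

lemma ENNReal.tsum_le_card_mul_tsum_of_injective {α β γ : Type*} [Fintype β] {f : α → ℝ≥0∞}
    (g : γ → ℝ≥0∞) {φ : α → β × γ} (hφ : Injective φ) (hf : ∀ a, f a ≤ g (φ a).2) :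
    ∑' a, f a ≤ Fintype.card β * ∑' c, g c :=
  calc ∑' a, f a ≤ ∑' a, g (φ a).2 := ENNReal.tsum_le_tsum hf
    _ ≤ ∑' q : β × γ, g q.2 := ENNReal.tsum_comp_le_tsum_of_injective hφ fun q => g q.2
    _ = Fintype.card β * ∑' c, g c := by simp [ENNReal.tsum_prod']

lemma tsum_ofReal_nrWeight_le (p k : ℝ) :
    ∑' M : ℤ, ENNReal.ofReal (nrWeight p k M) ≤ 4 * ∑' τ : ℤ, ENNReal.ofReal (jap τ ^ (-p)) := by
  set T := {M : ℤ | ∃ τ, NrWitness k M τ}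
  have hsupp : support (fun M => ENNReal.ofReal (nrWeight p k M)) ⊆ T := by
    intro M hM
    by_contra h
    rw [mem_support, nrWeight, dif_neg (show ¬ ∃ τ, NrWitness k M τ from h),
      ENNReal.ofReal_zero] at hM
    exact hM rfl
  rw [← tsum_subtype_eq_of_support_subset hsupp]
  let S : Finset ℤ := {0, 1, 3, 4}
  let φ : T → S × ℤ := fun M =>
    (⟨M.2.choose_spec.choose, by simpa [S] using M.2.choose_spec.choose_spec.1⟩, M.2.choose)
  have hφ : Injective φ := by
    intro M M' h
    simp only [φ, Prod.mk.injEq, Subtype.mk.injEq] at h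
    have hM := M.2.choose_spec.choose_spec.2.1
    have hM' := M'.2.choose_spec.choose_spec.2.1
    have : ((M : ℤ) : ℝ) = M' := by rw [hM, hM', h.1, h.2]
    exact Subtype.ext (by exact_mod_cast this)
  calc _ ≤ Fintype.card S * ∑' τ : ℤ, ENNReal.ofReal (jap τ ^ (-p)) :=
        ENNReal.tsum_le_card_mul_tsum_of_injective _ hφ fun M => by
          rw [nrWeight, dif_pos (show ∃ τ, NrWitness k M τ from M.2)]
    _ = _ := rfl

lemma tsum_ofReal_weight_le (p k : ℝ) :
    ∑' M : ℤ, ENNReal.ofReal (weight p k M) ≤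
      (4 + ENNReal.ofReal (101 ^ p)) * ∑' n : ℤ, ENNReal.ofReal (jap n ^ (-p)) :=
  calc ∑' M : ℤ, ENNReal.ofReal (weight p k M)
      ≤ ∑' M : ℤ, (ENNReal.ofReal (nrWeight p k M) +
          ENNReal.ofReal (101 ^ p) * ENNReal.ofReal (jap M ^ (-p))) :=
        ENNReal.tsum_le_tsum fun M => by
          rw [← ENNReal.ofReal_mul (by positivity)]
          exact ENNReal.ofReal_add_le
    _ = ∑' M : ℤ, ENNReal.ofReal (nrWeight p k M) +
          ENNReal.ofReal (101 ^ p) * ∑' n : ℤ, ENNReal.ofReal (jap n ^ (-p)) := by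
        rw [ENNReal.tsum_add, ENNReal.tsum_mul_left]
    _ ≤ _ := by
        rw [add_mul]
        gcongr
        exact tsum_ofReal_nrWeight_le p k

lemma ENNReal.tsum_le_rpow_mul_rpow_of_sq_le {ι : Type*} {f w g : ι → ℝ≥0∞}
    (h : ∀ i, f i ^ 2 ≤ w i * g i) :
    ∑' i, f i ≤ (∑' i, w i) ^ (1 / 2 : ℝ) * (∑' i, g i) ^ (1 / 2 : ℝ) := by
  let _ : MeasurableSpace ι := ⊤
  have hsqrt (x : ℝ≥0∞) : (x ^ (1 / 2 : ℝ)) ^ (2 : ℝ) = x := by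
    rw [← ENNReal.rpow_mul]; norm_num
  have hpt (i : ι) : f i ≤ w i ^ (1 / 2 : ℝ) * g i ^ (1 / 2 : ℝ) := by
    rw [← ENNReal.mul_rpow_of_nonneg _ _ (by norm_num), ← ENNReal.rpow_le_rpow_iff two_pos, hsqrt]
    exact_mod_cast h i
  have holder := ENNReal.lintegral_mul_le_Lp_mul_Lq MeasureTheory.Measure.count
    Real.HolderConjugate.two_two (f := fun i => w i ^ (1 / 2 : ℝ)) (g := fun i => g i ^ (1 / 2 : ℝ))
    Measurable.of_discrete.aemeasurable Measurable.of_discrete.aemeasurable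
  simp only [MeasureTheory.lintegral_count, Pi.mul_apply, hsqrt] at holder
  exact (ENNReal.tsum_le_tsum hpt).trans holder

lemma ENNReal.tsum_comp_ediv (L : ℕ) [NeZero L] (f : ℤ → ℝ≥0∞) :
    ∑' n : ℤ, f (n / L) = L * ∑' M : ℤ, f M := by
  calc ∑' n : ℤ, f (n / L) = ∑' q : ℤ × Fin L, f q.1 := (Int.divModEquiv L).tsum_eq fun q => f q.1
    _ = L * ∑' M : ℤ, f M := by simp [ENNReal.tsum_prod', ENNReal.tsum_mul_left]

lemma ofReal_sq_le_weight_mul {s k : ℝ} {L : ℕ} (hs : 1 ≤ s) (hk : 0 < k) {c : ℝ} (hc : 0 ≤ c)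
    (n : ℤ) :
    ENNReal.ofReal c ^ 2 ≤
      ENNReal.ofReal (weight (2 * s - 1) k (n / L)) *
        ENNReal.ofReal (mult s k L n ^ 2 * c ^ 2) := by
  rw [← ENNReal.ofReal_pow hc, ← ENNReal.ofReal_mul (weight_nonneg _ _ _)]
  refine ENNReal.ofReal_le_ofReal ?_
  calc c ^ 2 ≤ weight (2 * s - 1) k (n / L) * mult s k L n ^ 2 * c ^ 2 :=
        le_mul_of_one_le_left (sq_nonneg c) (one_le_weight_mul_mult_sq hs hk n)
    _ = _ := by ring

/-- part of Lemma 5.1. `Σ_ξ c_ξ ≲ L^{1/2} (Σ_ξ m(ξ)² c_ξ²)^{1/2}`,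
uniformly in `k` and `L`. -/
theorem stmt_13 (s : ℝ) (hs : 1 < s) :
    ∃ C : ℝ, 0 < C ∧ ∀ (L : ℕ) (k : ℝ), 0 < L → 0 < k →
      (∃ K : ℕ, (K : ℝ) = (L : ℝ) * k) →
      ∀ c : ℤ → ℝ, (∀ n, 0 ≤ c n) →
        ∑' n : ℤ, ENNReal.ofReal (c n) ≤
          ENNReal.ofReal (C * Real.sqrt (L : ℝ)) *
            (∑' n : ℤ, ENNReal.ofReal (mult s k L n ^ 2 * c n ^ 2)) ^ ((1 : ℝ) / 2) := by
  set B : ℝ≥0∞ := (4 + ENNReal.ofReal (101 ^ (2 * s - 1))) *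
    ∑' n : ℤ, ENNReal.ofReal (jap n ^ (-(2 * s - 1)))
  have hB : B ≠ ⊤ := ENNReal.mul_ne_top (by finiteness)
    (tsum_ofReal_jap_rpow_neg_ne_top (by linarith))
  refine ⟨(B ^ (1 / 2 : ℝ)).toReal + 1, by positivity, fun L k hL hk _ c hc => ?_⟩
  have : NeZero L := ⟨hL.ne'⟩
  have hC : (L * B) ^ (1 / 2 : ℝ) ≤ ENNReal.ofReal (((B ^ (1 / 2 : ℝ)).toReal + 1) * √L) := by
    rw [mul_comm, ENNReal.ofReal_mul (by positivity), ENNReal.mul_rpow_of_nonneg _ _ (by norm_num),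
      Real.sqrt_eq_rpow, ← ENNReal.ofReal_rpow_of_nonneg (by positivity) (by norm_num),
      ENNReal.ofReal_natCast]
    gcongr
    rw [ENNReal.ofReal_add ENNReal.toReal_nonneg zero_le_one, ENNReal.ofReal_toReal (by finiteness)]
    exact le_self_add
  calc ∑' n : ℤ, ENNReal.ofReal (c n)
      ≤ (∑' n : ℤ, ENNReal.ofReal (weight (2 * s - 1) k (n / L))) ^ (1 / 2 : ℝ) *
          (∑' n : ℤ, ENNReal.ofReal (mult s k L n ^ 2 * c n ^ 2)) ^ (1 / 2 : ℝ) :=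
        ENNReal.tsum_le_rpow_mul_rpow_of_sq_le fun n => ofReal_sq_le_weight_mul hs.le hk (hc n) n
    _ ≤ _ := by
        gcongr
        rw [ENNReal.tsum_comp_ediv L fun M => ENNReal.ofReal (weight (2 * s - 1) k M)]
        exact (ENNReal.rpow_le_rpow (by gcongr; exact tsum_ofReal_weight_le _ k)
          (by norm_num)).trans hC
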